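/- Assume λ₁,…,λ_m ∈ ℂ* are pairwise distinct. For any nonzero g in the tensor product T = ⊗_{k=1}^m Ω(α_k,β_k,γ_k,λ_k,g_k), set R_g = dim span_ℂ{g, a_n g, c_n g : n ∈ ℤ}. Then R_g ≥ m+1, with equality if and only if g lies in N = ℂ[t₁]⊗⋯⊗ℂ[t_m] (i.e., g involves no s-variables). -/

import Mathlib

/- STATEMENT 19: for pairwise distinct `λ_k`, and any nonzero `f` in the tensor product `T`, the dimension `R_f` of `span{f, a_n f, c_n f : n ∈ ℤ}` satisfies `R_f ≥ m+1`, with equality iff `f` lies in `N = ℂ[t₁]⊗⋯⊗ℂ[t_m]` (no `s`-variables). -/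
noncomputable section

open MvPolynomial

/-- the tensor product `⊗_{k=1}^m ℂ[s_k, t_k]`, realized as the polynomial
ring in the variables `s_k = X (Sum.inl k)`, `t_k = X (Sum.inr k)`. -/
abbrev TT (m : ℕ) : Type := MvPolynomial (Fin m ⊕ Fin m) ℂ

/-- substitution `s_k ↦ s_k - n`, all other variables fixed. -/
noncomputable def shf {m : ℕ} (k : Fin m) (n : ℤ) (f : TT m) : TT m :=
  MvPolynomial.aeval (Function.update (MvPolynomial.X : Fin m ⊕ Fin m → TT m)
    (Sum.inl k) (MvPolynomial.X (Sum.inl k) - MvPolynomial.C (n : ℂ))) f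

/-- `g_k(t_k)` as an element of the big polynomial ring. -/
noncomputable def gT {m : ℕ} (g : Fin m → Polynomial ℂ) (k : Fin m) : TT m :=
  Polynomial.aeval (MvPolynomial.X (Sum.inr k) : TT m) (g k)

variable {m : ℕ}

/-- diagonal action of `L_n`. -/
noncomputable def tL (α lam : Fin m → ℂ) (n : ℤ) (f : TT m) : TT m :=
  ∑ k : Fin m, (lam k ^ n) •
    ((MvPolynomial.X (Sum.inl k) + MvPolynomial.C ((n : ℂ) * α k)) * shf k n f)

/-- diagonal action of `d_n`. -/
noncomputable def tD (β γ lam : Fin m → ℂ) (g : Fin m → Polynomial ℂ) (n : ℤ) (f : TT m) :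
    TT m :=
  ∑ k : Fin m,
    ((lam k ^ n * (β k)⁻¹) •
        ((MvPolynomial.X (Sum.inr k) * gT g k + MvPolynomial.C (γ k)) * shf k n f)
      + (lam k ^ n) •
        (MvPolynomial.X (Sum.inr k) * MvPolynomial.pderiv (Sum.inr k) (shf k n f)))

/-- diagonal action of `a_n`. -/
noncomputable def tA (lam : Fin m → ℂ) (n : ℤ) (f : TT m) : TT m :=
  ∑ k : Fin m, (lam k ^ n) • (MvPolynomial.X (Sum.inr k) * shf k n f)

/-- diagonal action of `b_n`. -/
noncomputable def tB (β lam : Fin m → ℂ) (g : Fin m → Polynomial ℂ) (n : ℤ) (f : TT m) :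
    TT m :=
  ∑ k : Fin m,
    ((lam k ^ n) • (gT g k * shf k n f)
      + (lam k ^ n * β k) • MvPolynomial.pderiv (Sum.inr k) (shf k n f))

/-- diagonal action of `c_n`. -/
noncomputable def tC (β lam : Fin m → ℂ) (n : ℤ) (f : TT m) : TT m :=
  ∑ k : Fin m, (-(lam k ^ n) * β k) • shf k n f

/-!
Grade `T` by the total degree in the `s`-variables and let `F` be the top component of `f`.
The substitution `s_k ↦ s_k - n` fixes `F` and changes the next component by `-n ∂F/∂s_k`,
while multiplication by `t_k` preserves the grading. Hence the top components of
`f, a_0 f, …, a_{m-1} f` are `F` and `(∑_k λ_k^j t_k) F`, which are linearly independent by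
the Vandermonde determinant, so `R_f ≥ m + 1`. If these vectors already span, every `c_n f`
is a multiple of `f`; comparing the next-to-top components gives
`∑_k n λ_k^n β_k ∂F/∂s_k = 0` for all `n`, so every `∂F/∂s_k` vanishes (Vandermonde again)
and Euler's identity forces `F`, hence `f`, to have `s`-degree `0`. Conversely, for `f ∈ N`
every `a_n f` and `c_n f` lies in the span of `f, t_1 f, …, t_m f`.
-/

section WeightedComponents

variable {R σ : Type*} [CommSemiring R] {w : σ → ℕ}

lemma weightedHomogeneousComponent_monomial (u : ℕ) (a : σ →₀ ℕ) (r : R) :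
    weightedHomogeneousComponent w u (monomial a r) =
      if Finsupp.weight w a = u then monomial a r else 0 := by
  classical
  rw [weightedHomogeneousComponent_of_mem (isWeightedHomogeneous_monomial w a r rfl)]
  simp only [eq_comm]

lemma weight_erase_add_single {i : σ} (hw : w i = 1) (a : σ →₀ ℕ) (l : ℕ) :
    Finsupp.weight w (a.erase i + Finsupp.single i l) = Finsupp.weight w (a.erase i) + l := by
  rw [map_add, Finsupp.weight_apply (f := Finsupp.single i l), Finsupp.sum_single_index] <;>
    simp [hw]

lemma weightedHomogeneousComponent_X_mul {i : σ} (hw : w i = 0) (u : ℕ) (p : MvPolynomial σ R) :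
    weightedHomogeneousComponent w u (X i * p) = X i * weightedHomogeneousComponent w u p := by
  classical
  ext d
  simp only [coeff_weightedHomogeneousComponent, coeff_X_mul']
  by_cases hi : i ∈ d.support
  · have hd := Finsupp.weight_sub_single_add (w := w) (Finsupp.mem_support_iff.mp hi)
    rw [hw, add_zero] at hd
    simp only [hi, hd, if_true]
  · simp only [hi, if_false, ite_self]

lemma weightedHomogeneousComponent_weightedTotalDegree_ne_zero {p : MvPolynomial σ R}
    (hp : p ≠ 0) :
    weightedHomogeneousComponent w (weightedTotalDegree w p) p ≠ 0 := by
  obtain ⟨a, ha, hmax⟩ := Finset.exists_mem_eq_sup p.support (support_nonempty.mpr hp)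
    (Finsupp.weight w)
  refine ne_zero_iff.mpr ⟨a, ?_⟩
  rw [coeff_weightedHomogeneousComponent, if_pos]
  exacts [mem_support_iff.mp ha, hmax.symm]

lemma MvPolynomial.IsWeightedHomogeneous.degree_eq_zero_of_pderiv_eq_zero [IsDomain R]
    [CharZero R] [Fintype σ] {p : MvPolynomial σ R} {u : ℕ}
    (hp : IsWeightedHomogeneous w p u) (hp0 : p ≠ 0) (hd : ∀ i, w i ≠ 0 → pderiv i p = 0) :
    u = 0 := by
  have heuler := hp.sum_weight_X_mul_pderiv
  rw [Finset.sum_eq_zero fun i _ => ?_] at heuler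
  · exact (smul_eq_zero.mp heuler.symm).resolve_right hp0
  by_cases hi : w i = 0
  · rw [hi, zero_smul]
  · rw [hd i hi, mul_zero, smul_zero]

end WeightedComponents

section Shift

variable {R σ : Type*} [CommRing R] [DecidableEq σ] {w : σ → ℕ}

abbrev shiftVar (i : σ) (c : R) : MvPolynomial σ R →ₐ[R] MvPolynomial σ R :=
  aeval (Function.update X i (X i - C c))

variable {i : σ} {c : R}

lemma shiftVar_of_notMem_vars {p : MvPolynomial σ R} (hp : i ∉ p.vars) : shiftVar i c p = p :=
  (eval₂Hom_congr' rfl (fun _ hj _ => Function.update_of_ne (ne_of_mem_of_not_mem hj hp) _ _)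
    rfl).trans (aeval_X_left_apply p)

lemma shiftVar_monomial (a : σ →₀ ℕ) (r : R) :
    shiftVar i c (monomial a r) = ∑ l ∈ Finset.range (a i + 1),
      monomial (a.erase i + Finsupp.single i l) (r * (-c) ^ (a i - l) * (a i).choose l) := by
  have hfix : shiftVar i c (monomial (a.erase i) r) = monomial (a.erase i) r := by
    rw [aeval_monomial, monomial_eq, algebraMap_eq]
    congr 1
    refine Finsupp.prod_congr fun j hj => ?_
    rw [Function.update_of_ne (by rintro rfl; simp at hj)]
  conv_lhs =>
    rw [← Finsupp.erase_add_single i a, ← mul_one r, ← monomial_mul, ← X_pow_eq_monomial]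
  rw [map_mul, hfix, map_pow, aeval_X, Function.update_self, sub_eq_add_neg, ← map_neg,
    add_pow, Finset.mul_sum]
  refine Finset.sum_congr rfl fun l _ => ?_
  rw [X_pow_eq_monomial, ← C_pow, ← map_natCast C, mul_assoc, mul_assoc, ← map_mul,
    mul_comm (monomial _ 1), C_mul_monomial, monomial_mul]
  congr 1
  ring

lemma weightedHomogeneousComponent_shiftVar_monomial (hw : w i = 1) {u : ℕ} {a : σ →₀ ℕ}
    (ha : Finsupp.weight w a ≤ u + 1) (r : R) :
    weightedHomogeneousComponent w u (shiftVar i c (monomial a r)) =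
      weightedHomogeneousComponent w u (monomial a r) -
        c • pderiv i (weightedHomogeneousComponent w (u + 1) (monomial a r)) := by
  have hwa : Finsupp.weight w a = Finsupp.weight w (a.erase i) + a i := by
    rw [← weight_erase_add_single hw, Finsupp.erase_add_single]
  simp only [shiftVar_monomial, map_sum, weightedHomogeneousComponent_monomial,
    weight_erase_add_single hw]
  rcases Nat.lt_or_ge (Finsupp.weight w a) u with hlt | hge
  · rw [if_neg hlt.ne, if_neg (by omega), map_zero, smul_zero, sub_zero]
    exact Finset.sum_eq_zero fun l hl => if_neg (by simp at hl; omega)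
  rcases hge.eq_or_lt with heq | hgt
  · rw [if_pos heq.symm, if_neg (by omega), map_zero, smul_zero, sub_zero,
      Finset.sum_eq_single_of_mem (a i) (by simp), if_pos (by omega), Finsupp.erase_add_single]
    · simp
    · exact fun l _ hl => if_neg (by omega)
  rw [if_neg hgt.ne', if_pos (by omega), zero_sub, pderiv_monomial]
  rcases Nat.eq_zero_or_pos (a i) with h0 | hpos
  · rw [h0, Nat.cast_zero, mul_zero, monomial_zero, smul_zero, neg_zero]
    exact Finset.sum_eq_zero fun l _ => if_neg (by omega)
  have hexp : a.erase i + Finsupp.single i (a i - 1) = a - Finsupp.single i 1 := by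
    ext j
    rcases eq_or_ne j i with rfl | hj <;> simp [*]
  rw [Finset.sum_eq_single_of_mem (a i - 1) (by simp), if_pos (by omega), hexp,
    Nat.sub_sub_self hpos, Nat.choose_symm hpos, Nat.choose_one_right, smul_monomial, ← map_neg]
  · congr 1
    ring
  · exact fun l _ hl => if_neg (by omega)

/-- First-order Taylor expansion of the shift, read off in the two top weights. -/
lemma weightedHomogeneousComponent_shiftVar (hw : w i = 1) {u : ℕ} {p : MvPolynomial σ R}
    (hp : weightedTotalDegree w p ≤ u + 1) :
    weightedHomogeneousComponent w u (shiftVar i c p) =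
      weightedHomogeneousComponent w u p -
        c • pderiv i (weightedHomogeneousComponent w (u + 1) p) := by
  conv_lhs => rw [p.as_sum]
  conv_rhs => rw [p.as_sum]
  simp only [map_sum, Finset.smul_sum, ← Finset.sum_sub_distrib]
  exact Finset.sum_congr rfl fun a ha =>
    weightedHomogeneousComponent_shiftVar_monomial hw
      ((le_weightedTotalDegree w ha).trans hp) _

lemma weightedHomogeneousComponent_shiftVar_of_le (hw : w i = 1) {u : ℕ} {p : MvPolynomial σ R}
    (hp : weightedTotalDegree w p ≤ u) :
    weightedHomogeneousComponent w u (shiftVar i c p) = weightedHomogeneousComponent w u p := by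
  rw [weightedHomogeneousComponent_shiftVar hw (hp.trans u.le_succ),
    weightedHomogeneousComponent_eq_zero _ _ (Nat.lt_succ_of_le hp), map_zero, smul_zero,
    sub_zero]

end Shift

lemma eq_zero_of_C_add_sum_C_mul_X_eq_zero {R σ ι : Type*} [CommSemiring R] [Fintype ι]
    {e : ι → σ} (he : Function.Injective e) {a : R} {b : ι → R}
    (h : C a + ∑ k, C (b k) * X (e k) = 0) : a = 0 ∧ b = 0 := by
  classical
  refine ⟨by simpa [coeff_sum, coeff_C_mul, coeff_X] using congrArg (coeff 0) h,
    funext fun k => ?_⟩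
  simpa [coeff_sum, coeff_C_mul, coeff_X, coeff_C, Finsupp.single_eq_single_iff, he.eq_iff,
    eq_comm (a := (0 : σ →₀ ℕ))] using congrArg (coeff (Finsupp.single (e k) 1)) h

lemma eq_zero_of_forall_sum_pow_smul_eq_zero {K M : Type*} [Field K] [AddCommGroup M]
    [Module K M] {n : ℕ} {x : Fin n → K} (hx : Function.Injective x) {v : Fin n → M}
    (h : ∀ j : Fin n, ∑ i, x i ^ (j : ℕ) • v i = 0) : v = 0 := by
  funext i
  refine (Module.forall_dual_apply_eq_zero_iff K (v i)).mp fun φ => ?_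
  have hφ := Matrix.eq_zero_of_forall_pow_sum_mul_pow_eq_zero hx (v := fun i => φ (v i))
    fun j => by simpa [mul_comm] using congrArg φ (h j)
  exact congrFun hφ i

lemma natCast_le_rank_of_linearIndependent {K M : Type*} [DivisionRing K] [AddCommGroup M]
    [Module K M] {n : ℕ} {v : Fin n → M} (hv : LinearIndependent K v) {S : Submodule K M}
    (hS : Set.range v ⊆ S) : (n : Cardinal) ≤ Module.rank K S :=
  calc (n : Cardinal) = Cardinal.mk (Set.range v) := by
        simpa using (Cardinal.mk_range_eq_of_injective hv.injective).symm
    _ = Module.rank K (Submodule.span K (Set.range v)) := (rank_span hv).symm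
    _ ≤ Module.rank K S := Submodule.rank_mono (Submodule.span_le.mpr hS)

def sWeight (m : ℕ) : Fin m ⊕ Fin m → ℕ := Sum.elim (fun _ => 1) (fun _ => 0)

abbrev sDegree (f : TT m) : ℕ := weightedTotalDegree (sWeight m) f

abbrev sComponent (m u : ℕ) : TT m →ₗ[ℂ] TT m :=
  weightedHomogeneousComponent (sWeight m) u

abbrev sLeading (f : TT m) : TT m := sComponent m (sDegree f) f

section Actions

variable {f : TT m}

lemma sComponent_shf {u : ℕ} (hf : sDegree f ≤ u + 1) (k : Fin m) (n : ℤ) :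
    sComponent m u (shf k n f) =
      sComponent m u f - (n : ℂ) • pderiv (Sum.inl k) (sComponent m (u + 1) f) :=
  weightedHomogeneousComponent_shiftVar (w := sWeight m) (i := Sum.inl k) rfl hf

lemma sComponent_sDegree_shf (k : Fin m) (n : ℤ) :
    sComponent m (sDegree f) (shf k n f) = sLeading f :=
  weightedHomogeneousComponent_shiftVar_of_le (w := sWeight m) (i := Sum.inl k) rfl le_rfl

lemma sComponent_X_inr_mul (k : Fin m) (u : ℕ) (p : TT m) :
    sComponent m u (X (Sum.inr k) * p) = X (Sum.inr k) * sComponent m u p :=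
  weightedHomogeneousComponent_X_mul (w := sWeight m) rfl u p

lemma sComponent_sDegree_tA (lam : Fin m → ℂ) (n : ℤ) :
    sComponent m (sDegree f) (tA lam n f) =
      (∑ k, C (lam k ^ n) * X (Sum.inr k)) * sLeading f := by
  simp only [tA, map_sum, smul_eq_C_mul, weightedHomogeneousComponent_C_mul, sComponent_X_inr_mul,
    sComponent_sDegree_shf, Finset.sum_mul, mul_assoc]

lemma sComponent_sDegree_tC (β lam : Fin m → ℂ) (n : ℤ) :
    sComponent m (sDegree f) (tC β lam n f) = C (∑ k, -(lam k ^ n) * β k) * sLeading f := by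
  simp only [tC, map_sum, smul_eq_C_mul, weightedHomogeneousComponent_C_mul,
    sComponent_sDegree_shf, Finset.sum_mul]

end Actions

section Spans

variable {β lam : Fin m → ℂ} {f : TT m}

abbrev tAFamily (lam : Fin m → ℂ) (f : TT m) : Fin (m + 1) → TT m :=
  Fin.cons f fun j => tA lam j f

lemma sLeading_ne_zero (hf : f ≠ 0) : sLeading f ≠ 0 :=
  weightedHomogeneousComponent_weightedTotalDegree_ne_zero hf

lemma eq_and_eq_zero_of_smul_add_sum_tA_eq (hdist : Function.Injective lam) (hf : f ≠ 0)
    {κ e : ℂ} {d : Fin m → ℂ} {x : TT m}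
    (hx : sComponent m (sDegree f) x = C e * sLeading f)
    (h : κ • f + ∑ j : Fin m, d j • tA lam j f = x) : κ = e ∧ d = 0 := by
  have htop := congrArg (sComponent m (sDegree f)) h
  simp only [map_add, map_smul, map_sum, sComponent_sDegree_tA, hx] at htop
  have hform : (C (κ - e) + ∑ k, C (∑ j : Fin m, d j * lam k ^ (j : ℕ)) * X (Sum.inr k)) *
      sLeading f = 0 := by
    rw [← sub_eq_zero.mpr htop]
    simp only [smul_eq_C_mul, Finset.mul_sum, Finset.sum_mul, map_sub, map_sum, map_mul,
      zpow_natCast, add_mul, sub_mul]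
    rw [Finset.sum_comm]
    simp only [mul_assoc]
    abel
  obtain ⟨hκ, hd⟩ := eq_zero_of_C_add_sum_C_mul_X_eq_zero Sum.inr_injective
    ((mul_eq_zero.mp hform).resolve_right (sLeading_ne_zero hf))
  exact ⟨sub_eq_zero.mp hκ,
    Matrix.eq_zero_of_forall_index_sum_mul_pow_eq_zero hdist (congrFun hd)⟩

lemma linearIndependent_tAFamily (hdist : Function.Injective lam) (hf : f ≠ 0) :
    LinearIndependent ℂ (tAFamily lam f) := by
  refine Fintype.linearIndependent_iff.mpr fun g hg => ?_
  rw [Fin.sum_univ_succ] at hg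
  simp only [tAFamily, Fin.cons_zero, Fin.cons_succ] at hg
  obtain ⟨h0, hd⟩ := eq_and_eq_zero_of_smul_add_sum_tA_eq hdist hf (e := 0) (by simp) hg
  exact Fin.cases h0 (congrFun hd)

lemma tC_eq_smul_of_mem_span (hdist : Function.Injective lam) (hf : f ≠ 0) {n : ℤ}
    (h : tC β lam n f ∈ Submodule.span ℂ (Set.range (tAFamily lam f))) :
    tC β lam n f = (∑ k, -(lam k ^ n) * β k) • f := by
  obtain ⟨g, hg⟩ := (Submodule.mem_span_range_iff_exists_fun ℂ).mp h
  rw [Fin.sum_univ_succ] at hg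
  simp only [tAFamily, Fin.cons_zero, Fin.cons_succ] at hg
  obtain ⟨h0, hd⟩ :=
    eq_and_eq_zero_of_smul_add_sum_tA_eq hdist hf (sComponent_sDegree_tC β lam n) hg
  simp [← hg, h0, funext_iff.mp hd]

lemma pderiv_sLeading_eq_zero (hβ : ∀ k, β k ≠ 0) (hlam : ∀ k, lam k ≠ 0)
    (hdist : Function.Injective lam) {u : ℕ} (hu : sDegree f = u + 1)
    (h : ∀ n : ℤ, tC β lam n f = (∑ k, -(lam k ^ n) * β k) • f) (k : Fin m) :
    pderiv (Sum.inl k) (sLeading f) = 0 := by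
  have hsum : ∀ n : ℤ,
      ∑ k, (-(lam k ^ n) * β k * n) • pderiv (Sum.inl k) (sLeading f) = 0 := by
    intro n
    have hn := congrArg (sComponent m u) (h n)
    simp only [tC, map_sum, map_smul, sComponent_shf hu.le, ← hu, Finset.sum_smul, smul_sub,
      Finset.sum_sub_distrib, sub_eq_self, smul_smul] at hn
    exact hn
  have hv := eq_zero_of_forall_sum_pow_smul_eq_zero hdist
    (v := fun k => (lam k * β k) • pderiv (Sum.inl k) (sLeading f)) fun j => by
      have hj : ((j + 1 : ℕ) : ℂ) ≠ 0 := Nat.cast_ne_zero.mpr (j : ℕ).succ_ne_zero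
      rw [← smul_zero (-((j + 1 : ℕ) : ℂ))⁻¹, ← hsum (j + 1 : ℕ), Finset.smul_sum]
      refine Finset.sum_congr rfl fun k _ => ?_
      simp only [smul_smul, zpow_natCast, Int.cast_natCast]
      congr 1
      field_simp
      ring
  simpa [hlam k, hβ k] using congrFun hv k

lemma mem_supported_of_sDegree_eq_zero (h : sDegree f = 0) :
    f ∈ supported ℂ (Set.range Sum.inr) := by
  rw [mem_supported]
  rintro (k | k) hk
  · obtain ⟨d, hd, hdk⟩ := (mem_vars_iff_mem_support _).mp hk
    have hle := (Finsupp.le_weight (sWeight m) (s := Sum.inl k) one_ne_zero d).trans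
      ((le_weightedTotalDegree _ hd).trans h.le)
    exact absurd (Nat.le_zero.mp hle) (Finsupp.mem_support_iff.mp hdk)
  · exact ⟨k, rfl⟩

lemma mem_supported_of_forall_tC_mem_span (hβ : ∀ k, β k ≠ 0) (hlam : ∀ k, lam k ≠ 0)
    (hdist : Function.Injective lam) (hf : f ≠ 0)
    (h : ∀ n : ℤ, tC β lam n f ∈ Submodule.span ℂ (Set.range (tAFamily lam f))) :
    f ∈ supported ℂ (Set.range Sum.inr) := by
  refine mem_supported_of_sDegree_eq_zero ?_
  by_contra hne
  obtain ⟨u, hu⟩ := Nat.exists_eq_succ_of_ne_zero hne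
  refine hne <| (weightedHomogeneousComponent_isWeightedHomogeneous (w := sWeight m) _ f
    ).degree_eq_zero_of_pderiv_eq_zero (sLeading_ne_zero hf) fun i hi => ?_
  obtain k | k := i
  · exact pderiv_sLeading_eq_zero hβ hlam hdist hu
      (fun n => tC_eq_smul_of_mem_span hdist hf (h n)) k
  · exact absurd rfl hi

lemma shf_eq_self_of_mem_supported (hf : f ∈ supported ℂ (Set.range Sum.inr)) (k : Fin m)
    (n : ℤ) : shf k n f = f :=
  shiftVar_of_notMem_vars fun hk => by simpa using mem_supported.mp hf hk

lemma rank_span_le_of_mem_supported (hf : f ∈ supported ℂ (Set.range Sum.inr)) :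
    Module.rank ℂ (Submodule.span ℂ ({f} ∪ Set.range (fun n : ℤ => tA lam n f)
      ∪ Set.range (fun n : ℤ => tC β lam n f))) ≤ m + 1 := by
  set v : Fin (m + 1) → TT m := Fin.cons f fun k => X (Sum.inr k) * f
  set N := Submodule.span ℂ (Set.range v)
  have hf_mem : f ∈ N := Submodule.subset_span ⟨0, rfl⟩
  have hle : Submodule.span ℂ ({f} ∪ Set.range (fun n : ℤ => tA lam n f)
      ∪ Set.range (fun n : ℤ => tC β lam n f)) ≤ N := by
    rw [Submodule.span_le]
    rintro _ ((rfl | ⟨n, rfl⟩) | ⟨n, rfl⟩)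
    · exact hf_mem
    · refine N.sum_mem fun k _ => N.smul_mem _ ?_
      rw [shf_eq_self_of_mem_supported hf]
      exact Submodule.subset_span ⟨k.succ, rfl⟩
    · refine N.sum_mem fun k _ => N.smul_mem _ ?_
      rwa [shf_eq_self_of_mem_supported hf]
  calc _ ≤ Module.rank ℂ N := Submodule.rank_mono hle
    _ ≤ Cardinal.mk (Set.range v) := rank_span_le _
    _ ≤ Cardinal.mk (Fin (m + 1)) := Cardinal.mk_range_le
    _ = m + 1 := by simp

end Spans

theorem rank_ge_m_add_one_general
    (m : ℕ) (β lam : Fin m → ℂ)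
    (hβ : ∀ k, β k ≠ 0) (hlam : ∀ k, lam k ≠ 0) (hdist : Function.Injective lam)
    (f : TT m) (hf : f ≠ 0) :
    ((m + 1 : Cardinal) ≤ Module.rank ℂ
        (Submodule.span ℂ ({f} ∪ Set.range (fun n : ℤ => tA lam n f)
          ∪ Set.range (fun n : ℤ => tC β lam n f)))) ∧
    (Module.rank ℂ
        (Submodule.span ℂ ({f} ∪ Set.range (fun n : ℤ => tA lam n f)
          ∪ Set.range (fun n : ℤ => tC β lam n f)))
        = (m + 1 : Cardinal)
      ↔ f ∈ MvPolynomial.supported ℂ (Set.range Sum.inr)) := by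
  set S := Submodule.span ℂ ({f} ∪ Set.range (fun n : ℤ => tA lam n f)
    ∪ Set.range (fun n : ℤ => tC β lam n f))
  have hbasis : Set.range (tAFamily lam f) ⊆ S := by
    rw [Fin.range_cons, Set.insert_subset_iff]
    exact ⟨Submodule.subset_span (by simp), fun _ ⟨j, hj⟩ =>
      Submodule.subset_span (Or.inl (Or.inr ⟨j, hj⟩))⟩
  have hlower : (m + 1 : Cardinal) ≤ Module.rank ℂ S := by
    exact_mod_cast natCast_le_rank_of_linearIndependent (linearIndependent_tAFamily hdist hf) hbasis
  refine ⟨hlower, fun hrank => ?_,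
    fun hN => le_antisymm (rank_span_le_of_mem_supported hN) hlower⟩
  by_contra hN
  obtain ⟨n, hn⟩ : ∃ n : ℤ, tC β lam n f ∉ Submodule.span ℂ (Set.range (tAFamily lam f)) := by
    by_contra! h
    exact hN (mem_supported_of_forall_tC_mem_span hβ hlam hdist hf h)
  have hsucc := natCast_le_rank_of_linearIndependent
    (linearIndependent_finCons.mpr ⟨linearIndependent_tAFamily hdist hf, hn⟩)
    (by rw [Fin.range_cons, Set.insert_subset_iff]
        exact ⟨Submodule.subset_span (Or.inr ⟨n, rfl⟩), hbasis⟩)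
  rw [hrank] at hsucc
  norm_cast at hsucc
  omega

theorem rank_ge_m_add_one
    (m : ℕ) (α β γ lam : Fin m → ℂ) (g : Fin m → Polynomial ℂ)
    (hβ : ∀ k, β k ≠ 0) (hlam : ∀ k, lam k ≠ 0) (hdist : Function.Injective lam)
    (f : TT m) (hf : f ≠ 0) :
    ((m + 1 : Cardinal) ≤ Module.rank ℂ
        (Submodule.span ℂ ({f} ∪ Set.range (fun n : ℤ => tA lam n f)
          ∪ Set.range (fun n : ℤ => tC β lam n f)))) ∧
    (Module.rank ℂ
        (Submodule.span ℂ ({f} ∪ Set.range (fun n : ℤ => tA lam n f)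
          ∪ Set.range (fun n : ℤ => tC β lam n f)))
        = (m + 1 : Cardinal)
      ↔ f ∈ MvPolynomial.supported ℂ (Set.range Sum.inr)) :=
  rank_ge_m_add_one_general m β lam hβ hlam hdist f hf

end
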